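/- Let S ⊂ H be super-discrete (every coordinate projection of S is discrete in R) with 0 ∈ S. Then there is a finite subset T ⊆ S \ {0} such that VR_S(0) = ∩_{t∈T} h(0,t); in particular VR_S(0) is a finite intersection of tropical halfspaces. -/

import Mathlib

noncomputable def tmax {n : ℕ} [NeZero n] (f : Fin n → ℝ) : ℝ :=
  Finset.univ.sup' Finset.univ_nonempty f

/-- The coordinate domination relation: `qrel a b` means that if `a ≤ 0`
then `b ≤ a`. -/
def qrel (a b : ℝ) : Prop := a ≤ 0 → b ≤ a

instance : IsRefl ℝ qrel := ⟨fun a _ => le_refl a⟩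

instance : IsTrans ℝ qrel :=
  ⟨fun a b c hab hbc ha => le_trans (hbc (le_trans (hab ha) ha)) (hab ha)⟩

instance : IsPreorder ℝ qrel where
  refl a _ := le_refl a

/-- A set of reals with no accumulation points is partially well ordered
under `qrel`. -/
lemma pwo_qrel (A : Set ℝ) (hA : ∀ t : ℝ, ¬ AccPt t (Filter.principal A)) :
    A.PartiallyWellOrderedOn qrel := by
  rw [Set.partiallyWellOrderedOn_iff_exists_lt]
  intro f hf
  by_contra hcon
  push_neg at hcon
  have hbad : ∀ m n : ℕ, m < n → f m ≤ 0 ∧ f m < f n := by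
    intro m n hmn
    have := hcon m n hmn
    unfold qrel at this
    push_neg at this
    exact ⟨this.1, this.2⟩
  have hsm : StrictMono f := fun m n h => (hbad m n h).2
  have hb : BddAbove (Set.range f) := by
    refine ⟨0, ?_⟩
    rintro _ ⟨k, rfl⟩
    exact (hbad k (k + 1) (Nat.lt_succ_self k)).1
  set L := ⨆ k, f k with hL
  have htend : Filter.Tendsto f Filter.atTop (nhds L) :=
    tendsto_atTop_ciSup hsm.monotone hb
  have hlt : ∀ k, f k < L := fun k =>
    lt_of_lt_of_le (hsm (Nat.lt_succ_self k)) (le_ciSup hb (k + 1))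
  refine hA L ?_
  rw [accPt_iff_nhds]
  intro U hU
  obtain ⟨k, hk⟩ := (htend.eventually (eventually_mem_nhds_iff.mpr hU)).exists
  exact ⟨f k, ⟨mem_of_mem_nhds hk, hf k⟩, ne_of_lt (hlt k)⟩

/-- Dickson-style product lemma for `qrel` on finitely many coordinates. -/
lemma pwo_pi {n : ℕ} (S : Set (Fin n → ℝ))
    (hsd : ∀ i : Fin n, ∀ t : ℝ, ¬ AccPt t (Filter.principal ((fun x : Fin n → ℝ => x i) '' S))) :
    S.PartiallyWellOrderedOn (fun t s => ∀ i, qrel (t i) (s i)) := by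
  have key : ∀ I : Finset (Fin n),
      S.PartiallyWellOrderedOn (fun t s => ∀ i ∈ I, qrel (t i) (s i)) := by
    intro I
    induction I using Finset.induction_on with
    | empty =>
      rw [Set.partiallyWellOrderedOn_iff_exists_lt]
      intro f _
      exact ⟨0, 1, Nat.zero_lt_one, by simp⟩
    | @insert a I ha ih =>
      rw [Set.partiallyWellOrderedOn_iff_exists_lt]
      intro f hf
      have hpa : ((fun x : Fin n → ℝ => x a) '' S).PartiallyWellOrderedOn qrel :=
        pwo_qrel _ (hsd a)
      obtain ⟨g, hg⟩ := hpa.exists_monotone_subseq (f := fun k => f k a)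
        (fun k => ⟨f k, hf k, rfl⟩)
      obtain ⟨m, n, hmn, hr⟩ := ih.exists_lt (f := f ∘ g) (fun k => hf (g k))
      refine ⟨g m, g n, g.strictMono hmn, ?_⟩
      intro i hi
      rcases Finset.mem_insert.mp hi with h | h
      · subst h; exact hg m n hmn.le
      · exact hr i h
  rw [Set.partiallyWellOrderedOn_iff_exists_lt]
  intro f hf
  obtain ⟨m, n, hmn, hr⟩ := (key Finset.univ).exists_lt hf
  exact ⟨m, n, hmn, fun i => hr i (Finset.mem_univ i)⟩

/-- If `t` dominates `s` coordinatewise (on nonpositive coordinates of `t`),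
then the halfspace condition for `t` implies that for `s`. -/
lemma dom_imp {n : ℕ} [NeZero n] (t s x : Fin n → ℝ)
    (h : ∀ i, qrel (t i) (s i))
    (hx : tmax x ≤ tmax (fun i => x i - t i)) :
    tmax x ≤ tmax (fun i => x i - s i) := by
  obtain ⟨i, -, hi⟩ := Finset.exists_mem_eq_sup' (Finset.univ_nonempty (α := Fin n))
    (fun i => x i - t i)
  have h1 : tmax x ≤ x i - t i := by unfold tmax at hx; rw [hi] at hx; exact hx
  have h2 : x i ≤ tmax x := Finset.le_sup' _ (Finset.mem_univ i)
  have ht0 : t i ≤ 0 := by linarith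
  have hs : s i ≤ t i := h i ht0
  calc tmax x ≤ x i - t i := h1
    _ ≤ x i - s i := by linarith
    _ ≤ tmax (fun i => x i - s i) :=
        Finset.le_sup' (fun i => x i - s i) (Finset.mem_univ i)

theorem stmt14 {n : ℕ} [NeZero n] (S : Set (Fin n → ℝ))
    (hSH : ∀ s ∈ S, ∑ i, s i = 0)
    (hsd : ∀ i : Fin n, ∀ t : ℝ, ¬ AccPt t (Filter.principal ((fun x : Fin n → ℝ => x i) '' S)))
    (h0 : (0 : Fin n → ℝ) ∈ S) :
    ∃ T : Finset (Fin n → ℝ), ↑T ⊆ S \ {0} ∧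
      {x : Fin n → ℝ | (∑ i, x i = 0) ∧
          ∀ s ∈ S, s ≠ 0 → tmax x ≤ tmax (fun i => x i - s i)} =
        {x : Fin n → ℝ | (∑ i, x i = 0) ∧
          ∀ t ∈ T, tmax x ≤ tmax (fun i => x i - t i)} := by
  classical
  let α := Fin n → ℝ
  by_contra hcon
  push_neg at hcon
  -- given any failing finite set, there is a "new" undominated element of S \ {0}
  have key : ∀ T : Finset α, ↑T ⊆ S \ {0} →
      ∃ s, (s ∈ S \ {0}) ∧ ∀ t ∈ T, ¬ (∀ i, qrel (t i) (s i)) := by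
    intro T hT
    have hne := hcon T hT
    have hsub : {x : α | (∑ i, x i = 0) ∧
          ∀ s ∈ S, s ≠ 0 → tmax x ≤ tmax (fun i => x i - s i)} ⊆
        {x : α | (∑ i, x i = 0) ∧
          ∀ t ∈ T, tmax x ≤ tmax (fun i => x i - t i)} := by
      rintro x ⟨hx0, hx⟩
      refine ⟨hx0, fun t ht => ?_⟩
      have := hT ht
      exact hx t this.1 this.2
    have hnsub : ¬ ({x : α | (∑ i, x i = 0) ∧
          ∀ t ∈ T, tmax x ≤ tmax (fun i => x i - t i)} ⊆
        {x : α | (∑ i, x i = 0) ∧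
          ∀ s ∈ S, s ≠ 0 → tmax x ≤ tmax (fun i => x i - s i)}) :=
      fun h => hne (Set.Subset.antisymm hsub h)
    rw [Set.not_subset] at hnsub
    obtain ⟨x, hxR, hxL⟩ := hnsub
    simp only [Set.mem_setOf_eq] at hxR hxL
    push_neg at hxL
    obtain ⟨s, hsS, hs0, hslt⟩ := hxL hxR.1
    refine ⟨s, ⟨hsS, hs0⟩, fun t htT hdom => ?_⟩
    exact absurd (dom_imp t s x hdom (hxR.2 t htT)) (not_le.mpr hslt)
  -- choice function
  obtain ⟨w, hw⟩ : ∃ w : Finset α → α, ∀ T : Finset α, ↑T ⊆ S \ {0} →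
      (w T ∈ S \ {0} ∧ ∀ t ∈ T, ¬ (∀ i, qrel (t i) (w T i))) := by
    refine ⟨fun T => if h : (↑T : Set α) ⊆ S \ {0} then (key T h).choose else 0, ?_⟩
    intro T hT
    simp only [dif_pos hT]
    exact (key T hT).choose_spec
  -- iterate
  obtain ⟨F, hF0, hFs⟩ : ∃ F : ℕ → Finset α, F 0 = ∅ ∧
      ∀ k, F (k + 1) = insert (w (F k)) (F k) :=
    ⟨fun k => Nat.rec ∅ (fun _ T => insert (w T) T) k, rfl, fun _ => rfl⟩
  have hFS : ∀ k, (↑(F k) : Set α) ⊆ S \ {0} := by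
    intro k
    induction k with
    | zero => rw [hF0]; simp
    | succ k ih =>
      rw [hFs, Finset.coe_insert, Set.insert_subset_iff]
      exact ⟨(hw (F k) ih).1, ih⟩
  have hmono : ∀ m k : ℕ, m ≤ k → F m ⊆ F k := by
    intro m k hmk
    induction k with
    | zero => rw [Nat.le_zero.mp hmk]
    | succ k ih =>
      rcases eq_or_lt_of_le hmk with h | h
      · rw [h]
      · rw [hFs]
        exact (ih (Nat.lt_succ_iff.mp h)).trans (Finset.subset_insert _ _)
  set f : ℕ → α := fun k => w (F k) with hf
  have hfS : ∀ k, f k ∈ S \ {0} := fun k => (hw (F k) (hFS k)).1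
  have hbad : ∀ m k : ℕ, m < k → ¬ (∀ i, qrel (f m i) (f k i)) := by
    intro m k hmk
    have h1 : f m ∈ F (m + 1) := by rw [hFs]; exact Finset.mem_insert_self _ _
    have h2 : f m ∈ F k := hmono (m + 1) k hmk h1
    exact (hw (F k) (hFS k)).2 (f m) h2
  have hpwo : (S \ {0}).PartiallyWellOrderedOn
      (fun t s : α => ∀ i, qrel (t i) (s i)) :=
    (pwo_pi S hsd).mono Set.diff_subset
  obtain ⟨m, k, hmk, hr⟩ := hpwo.exists_lt hfS
  exact hbad m k hmk hr
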